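/- Reduction in the simply-typed λ-calculus with sums is confluent: if t ⇝* u and t ⇝* u', then there exists a term v such that u ⇝* v and u' ⇝* v. -/

import Mathlib

namespace STLCp

/-- Types of the simply-typed λ-calculus with sums, over base types `B`. -/
inductive Ty (B : Type) : Type
  | base : B → Ty B
  | unit : Ty B
  | empty : Ty B
  | prod : Ty B → Ty B → Ty B
  | sum : Ty B → Ty B → Ty B
  | arr : Ty B → Ty B → Ty B

/-- Terms (de Bruijn style) over a set of constants `C`. -/
inductive Tm (C : Type) : Type
  | cst : C → Tm C
  | var : Nat → Tm C
  | star : Tm C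
  | pair : Tm C → Tm C → Tm C
  | proj1 : Tm C → Tm C
  | proj2 : Tm C → Tm C
  | lam : Tm C → Tm C
  | app : Tm C → Tm C → Tm C
  | inl : Tm C → Tm C
  | inr : Tm C → Tm C
  | raise : Tm C → Tm C
  | case : Tm C → Tm C → Tm C → Tm C

variable {B C : Type}

/-- Lifting a renaming under a binder. -/
def liftRen (ρ : Nat → Nat) : Nat → Nat
  | 0 => 0
  | n + 1 => ρ n + 1

/-- Action of renamings on terms. -/
def rename (ρ : Nat → Nat) : Tm C → Tm C
  | .cst c => .cst c
  | .var n => .var (ρ n)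
  | .star => .star
  | .pair t u => .pair (rename ρ t) (rename ρ u)
  | .proj1 t => .proj1 (rename ρ t)
  | .proj2 t => .proj2 (rename ρ t)
  | .lam t => .lam (rename (liftRen ρ) t)
  | .app t u => .app (rename ρ t) (rename ρ u)
  | .inl t => .inl (rename ρ t)
  | .inr t => .inr (rename ρ t)
  | .raise t => .raise (rename ρ t)
  | .case s bl br => .case (rename ρ s) (rename (liftRen ρ) bl) (rename (liftRen ρ) br)

/-- Lifting a parallel substitution under a binder. -/
def liftSub (σ : Nat → Tm C) : Nat → Tm C
  | 0 => .var 0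
  | n + 1 => rename Nat.succ (σ n)

/-- Action of parallel substitutions on terms, `t[σ]`. -/
def subst (σ : Nat → Tm C) : Tm C → Tm C
  | .cst c => .cst c
  | .var n => σ n
  | .star => .star
  | .pair t u => .pair (subst σ t) (subst σ u)
  | .proj1 t => .proj1 (subst σ t)
  | .proj2 t => .proj2 (subst σ t)
  | .lam t => .lam (subst (liftSub σ) t)
  | .app t u => .app (subst σ t) (subst σ u)
  | .inl t => .inl (subst σ t)
  | .inr t => .inr (subst σ t)
  | .raise t => .raise (subst σ t)
  | .case s bl br => .case (subst σ s) (subst (liftSub σ) bl) (subst (liftSub σ) br)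

/-- The substitution `u..`: maps the last variable to `u`, the identity elsewhere. -/
def sub0 (u : Tm C) : Nat → Tm C
  | 0 => u
  | n + 1 => .var n

/-- Eliminations: application, projections and case analysis. -/
inductive Elim (C : Type) : Type
  | eapp : Tm C → Elim C
  | eproj1 : Elim C
  | eproj2 : Elim C
  | ecase : Tm C → Tm C → Elim C

/-- Plugging a term into an elimination, `e[t]`. -/
def plug : Elim C → Tm C → Tm C
  | .eapp u, t => .app t u
  | .eproj1, t => .proj1 t
  | .eproj2, t => .proj2 t
  | .ecase bl br, t => .case t bl br

/-- Weakening the contents of an elimination (used when pushing it under a binder). -/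
def weakenElim : Elim C → Elim C
  | .eapp u => .eapp (rename Nat.succ u)
  | .eproj1 => .eproj1
  | .eproj2 => .eproj2
  | .ecase bl br => .ecase (rename (liftRen Nat.succ) bl) (rename (liftRen Nat.succ) br)

/-- The β-rules. -/
inductive BetaBase : Tm C → Tm C → Prop
  | proj1 (t u : Tm C) : BetaBase (.proj1 (.pair t u)) t
  | proj2 (t u : Tm C) : BetaBase (.proj2 (.pair t u)) u
  | app (t u : Tm C) : BetaBase (.app (.lam t) u) (subst (sub0 u) t)
  | case_inl (a bl br : Tm C) : BetaBase (.case (.inl a) bl br) (subst (sub0 a) bl)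
  | case_inr (b bl br : Tm C) : BetaBase (.case (.inr b) bl br) (subst (sub0 b) br)

/-- The commuting-conversion rules. -/
inductive CCBase : Tm C → Tm C → Prop
  | raise (e : Elim C) (t : Tm C) : CCBase (plug e (.raise t)) (.raise t)
  | case (e : Elim C) (s bl br : Tm C) :
      CCBase (plug e (.case s bl br))
        (.case s (plug (weakenElim e) bl) (plug (weakenElim e) br))

/-- Congruence closure of a base relation on terms. -/
inductive Cong (R : Tm C → Tm C → Prop) : Tm C → Tm C → Prop
  | base : R t u → Cong R t u
  | pairL : Cong R t t' → Cong R (.pair t u) (.pair t' u)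
  | pairR : Cong R u u' → Cong R (.pair t u) (.pair t u')
  | proj1 : Cong R t t' → Cong R (.proj1 t) (.proj1 t')
  | proj2 : Cong R t t' → Cong R (.proj2 t) (.proj2 t')
  | lam : Cong R t t' → Cong R (.lam t) (.lam t')
  | appL : Cong R t t' → Cong R (.app t u) (.app t' u)
  | appR : Cong R u u' → Cong R (.app t u) (.app t u')
  | inl : Cong R t t' → Cong R (.inl t) (.inl t')
  | inr : Cong R t t' → Cong R (.inr t) (.inr t')
  | raise : Cong R t t' → Cong R (.raise t) (.raise t')
  | caseS : Cong R s s' → Cong R (.case s bl br) (.case s' bl br)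
  | caseL : Cong R bl bl' → Cong R (.case s bl br) (.case s bl' br)
  | caseR : Cong R br br' → Cong R (.case s bl br) (.case s bl br')

/-- One-step β-reduction. -/
def StepBeta : Tm C → Tm C → Prop := Cong BetaBase

/-- One-step commuting-conversion reduction. -/
def StepCC : Tm C → Tm C → Prop := Cong CCBase

/-- One-step reduction (β-rules together with commuting conversions). -/
def Step : Tm C → Tm C → Prop := Cong (fun t u => BetaBase t u ∨ CCBase t u)

/-- Reflexive-transitive closures. -/
def RedsBeta : Tm C → Tm C → Prop := Relation.ReflTransGen StepBeta
def RedsCC : Tm C → Tm C → Prop := Relation.ReflTransGen StepCC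
def Reds : Tm C → Tm C → Prop := Relation.ReflTransGen Step

/-- Typing judgment `Γ ⊢ t : A` over a language given by `tyof : C → Ty B`.
Contexts are lists of types, the head being the last-bound variable. -/
inductive HasType (tyof : C → Ty B) : List (Ty B) → Tm C → Ty B → Prop
  | cst (Γ) (c : C) : HasType tyof Γ (.cst c) (tyof c)
  | var : Γ[n]? = some A → HasType tyof Γ (.var n) A
  | star : HasType tyof Γ .star .unit
  | pair : HasType tyof Γ t A → HasType tyof Γ u A' →
      HasType tyof Γ (.pair t u) (.prod A A')
  | proj1 : HasType tyof Γ p (.prod A A') → HasType tyof Γ (.proj1 p) A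
  | proj2 : HasType tyof Γ p (.prod A A') → HasType tyof Γ (.proj2 p) A'
  | lam : HasType tyof (A :: Γ) t A' → HasType tyof Γ (.lam t) (.arr A A')
  | app : HasType tyof Γ t (.arr A A') → HasType tyof Γ u A →
      HasType tyof Γ (.app t u) A'
  | raise : HasType tyof Γ t .empty → HasType tyof Γ (.raise t) A
  | inl : HasType tyof Γ a A → HasType tyof Γ (.inl a) (.sum A A')
  | inr : HasType tyof Γ b A' → HasType tyof Γ (.inr b) (.sum A A')
  | case : HasType tyof Γ s (.sum A A') → HasType tyof (A :: Γ) bl T →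
      HasType tyof (A' :: Γ) br T → HasType tyof Γ (.case s bl br) T

mutual
  /-- Bidirectional checking judgment `Γ ⊢ t ⇐ A` (normal forms). -/
  inductive Check (tyof : C → Ty B) : List (Ty B) → Tm C → Ty B → Prop
    | star : Check tyof Γ .star .unit
    | pair : Check tyof Γ t A → Check tyof Γ u A' →
        Check tyof Γ (.pair t u) (.prod A A')
    | lam : Check tyof (A :: Γ) t A' → Check tyof Γ (.lam t) (.arr A A')
    | inl : Check tyof Γ a A → Check tyof Γ (.inl a) (.sum A A')
    | inr : Check tyof Γ b A' → Check tyof Γ (.inr b) (.sum A A')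
    | demote : Infer tyof Γ t A → A = A' → Check tyof Γ t A'
    | raise : Infer tyof Γ t .empty → Check tyof Γ (.raise t) A
    | case : Infer tyof Γ s (.sum A A') → Check tyof (A :: Γ) bl T →
        Check tyof (A' :: Γ) br T → Check tyof Γ (.case s bl br) T

  /-- Bidirectional inference judgment `Γ ⊢ t ⇒ A` (neutral forms). -/
  inductive Infer (tyof : C → Ty B) : List (Ty B) → Tm C → Ty B → Prop
    | cst (Γ) (c : C) : Infer tyof Γ (.cst c) (tyof c)
    | var : Γ[n]? = some A → Infer tyof Γ (.var n) A
    | proj1 : Infer tyof Γ p (.prod A A') → Infer tyof Γ (.proj1 p) A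
    | proj2 : Infer tyof Γ p (.prod A A') → Infer tyof Γ (.proj2 p) A'
    | app : Infer tyof Γ t (.arr A A') → Check tyof Γ u A →
        Infer tyof Γ (.app t u) A'
end

/-- The substitution replacing the last variable by `inl` of itself
(used in the η-law for sums). -/
def inlSub : Nat → Tm C
  | 0 => .inl (.var 0)
  | n + 1 => .var (n + 1)

/-- The substitution replacing the last variable by `inr` of itself. -/
def inrSub : Nat → Tm C
  | 0 => .inr (.var 0)
  | n + 1 => .var (n + 1)

/-- Conversion `Γ ⊢ t ≡ u : A`: the least congruent equivalence relation on
well-typed terms containing the β and η laws for all type formers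
(the equational theory of bicartesian closed categories). -/
inductive Conv (tyof : C → Ty B) : List (Ty B) → Tm C → Tm C → Ty B → Prop
  | refl : HasType tyof Γ t A → Conv tyof Γ t t A
  | symm : Conv tyof Γ t u A → Conv tyof Γ u t A
  | trans : Conv tyof Γ t u A → Conv tyof Γ u v A → Conv tyof Γ t v A
  -- congruence
  | pair : Conv tyof Γ t t' A → Conv tyof Γ u u' A' →
      Conv tyof Γ (.pair t u) (.pair t' u') (.prod A A')
  | proj1 : Conv tyof Γ p p' (.prod A A') → Conv tyof Γ (.proj1 p) (.proj1 p') A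
  | proj2 : Conv tyof Γ p p' (.prod A A') → Conv tyof Γ (.proj2 p) (.proj2 p') A'
  | lam : Conv tyof (A :: Γ) t t' A' → Conv tyof Γ (.lam t) (.lam t') (.arr A A')
  | app : Conv tyof Γ t t' (.arr A A') → Conv tyof Γ u u' A →
      Conv tyof Γ (.app t u) (.app t' u') A'
  | inl : Conv tyof Γ a a' A → Conv tyof Γ (.inl a) (.inl a') (.sum A A')
  | inr : Conv tyof Γ b b' A' → Conv tyof Γ (.inr b) (.inr b') (.sum A A')
  | raise : Conv tyof Γ t t' .empty → Conv tyof Γ (.raise t) (.raise t') A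
  | case : Conv tyof Γ s s' (.sum A A') → Conv tyof (A :: Γ) bl bl' T →
      Conv tyof (A' :: Γ) br br' T →
      Conv tyof Γ (.case s bl br) (.case s' bl' br') T
  -- β laws
  | beta_proj1 : HasType tyof Γ t A → HasType tyof Γ u A' →
      Conv tyof Γ (.proj1 (.pair t u)) t A
  | beta_proj2 : HasType tyof Γ t A → HasType tyof Γ u A' →
      Conv tyof Γ (.proj2 (.pair t u)) u A'
  | beta_app : HasType tyof (A :: Γ) t A' → HasType tyof Γ u A →
      Conv tyof Γ (.app (.lam t) u) (subst (sub0 u) t) A'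
  | beta_inl : HasType tyof Γ a A → HasType tyof (A :: Γ) bl T →
      HasType tyof (A' :: Γ) br T →
      Conv tyof Γ (.case (.inl a) bl br) (subst (sub0 a) bl) T
  | beta_inr : HasType tyof Γ b A' → HasType tyof (A :: Γ) bl T →
      HasType tyof (A' :: Γ) br T →
      Conv tyof Γ (.case (.inr b) bl br) (subst (sub0 b) br) T
  -- η laws
  | eta_unit : HasType tyof Γ t .unit → Conv tyof Γ t .star .unit
  | eta_prod : HasType tyof Γ t (.prod A A') →
      Conv tyof Γ t (.pair (.proj1 t) (.proj2 t)) (.prod A A')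
  | eta_arr : HasType tyof Γ t (.arr A A') →
      Conv tyof Γ t (.lam (.app (rename Nat.succ t) (.var 0))) (.arr A A')
  | eta_empty : HasType tyof Γ s .empty → HasType tyof Γ u T →
      Conv tyof Γ u (.raise s) T
  | eta_sum : HasType tyof Γ s (.sum A A') → HasType tyof (.sum A A' :: Γ) u T →
      Conv tyof Γ (subst (sub0 s) u)
        (.case s (subst inlSub u) (subst inrSub u)) T

/-- `t` is covered by the predicate `F`: `t` is a case tree whose nodes are
eliminations of neutrals at positive types and whose leaves satisfy `F`
(in suitably extended contexts). -/
inductive Covered (tyof : C → Ty B) (F : List (Ty B) → Tm C → Prop) :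
    List (Ty B) → Tm C → Prop
  | leaf : F Γ t → Covered tyof F Γ t
  | raise : Infer tyof Γ n .empty → Covered tyof F Γ (.raise n)
  | case : Infer tyof Γ n (.sum A A') → Covered tyof F (A :: Γ) bl →
      Covered tyof F (A' :: Γ) br → Covered tyof F Γ (.case n bl br)

/-- `ρ` is a (typed) renaming from `Δ` to `Γ`. -/
def IsRen (ρ : Nat → Nat) (Δ Γ : List (Ty B)) : Prop :=
  ∀ n A, Γ[n]? = some A → Δ[ρ n]? = some A

/-- Values at a type, defined by induction on the type (logical relation). -/
def Value (tyof : C → Ty B) : Ty B → List (Ty B) → Tm C → Prop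
  | .base b => Covered tyof (fun Δ u => Infer tyof Δ u (.base b))
  | .empty => Covered tyof (fun Δ u => Infer tyof Δ u .empty)
  | .sum A A' => Covered tyof (fun Δ u =>
      Infer tyof Δ u (.sum A A') ∨
      (∃ a, u = .inl a ∧ Value tyof A Δ a) ∨
      (∃ b, u = .inr b ∧ Value tyof A' Δ b))
  | .unit => fun Γ t => Check tyof Γ t .unit
  | .prod A A' => fun Γ t => Check tyof Γ t (.prod A A') ∧
      (∃ v, Reds (.proj1 t) v ∧ Value tyof A Γ v) ∧
      (∃ v, Reds (.proj2 t) v ∧ Value tyof A' Γ v)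
  | .arr A A' => fun Γ t => Check tyof Γ t (.arr A A') ∧
      ∀ Δ ρ, IsRen ρ Δ Γ → ∀ u, Value tyof A Δ u →
        ∃ v, Reds (.app (rename ρ t) u) v ∧ Value tyof A' Δ v

/-- `t` is reducible at `T` in `Γ`: it reduces to a value at `T`. -/
def Reducible (tyof : C → Ty B) (T : Ty B) (Γ : List (Ty B)) (t : Tm C) : Prop :=
  ∃ v, Reds t v ∧ Value tyof T Γ v

/-- Polarised vocabulary of a type: `voc true A = A⁺`, `voc false A = A⁻`. -/
def voc (p : Bool) : Ty B → Set B
  | .base b => if p then {b} else ∅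
  | .unit => ∅
  | .empty => ∅
  | .prod A A' => voc p A ∪ voc p A'
  | .sum A A' => voc p A ∪ voc p A'
  | .arr A A' => voc (!p) A ∪ voc p A'

/-- Polarised vocabulary of a context. -/
def vocCtx (p : Bool) (Γ : List (Ty B)) : Set B :=
  {b | ∃ A ∈ Γ, b ∈ voc p A}

/-- Context partitions `Γ = Γs ⋈ Γt`. -/
inductive Splits {B : Type} : List (Ty B) → List (Ty B) → List (Ty B) → Type
  | nil : Splits [] [] []
  | left (A : Ty B) : Splits Γ Γs Γt → Splits (A :: Γ) (A :: Γs) Γt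
  | right (A : Ty B) : Splits Γ Γs Γt → Splits (A :: Γ) Γs (A :: Γt)

/-- The renaming embedding `Γs` into `Γ` induced by a partition. -/
def Splits.renS {B : Type} : {Γ Γs Γt : List (Ty B)} → Splits Γ Γs Γt → Nat → Nat
  | _, _, _, .nil => id
  | _, _, _, .left _ s => fun n => match n with | 0 => 0 | m + 1 => s.renS m + 1
  | _, _, _, .right _ s => fun n => s.renS n + 1

/-- The renaming embedding `Γt` into `Γ` induced by a partition. -/
def Splits.renT {B : Type} : {Γ Γs Γt : List (Ty B)} → Splits Γ Γs Γt → Nat → Nat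
  | _, _, _, .nil => id
  | _, _, _, .left _ s => fun n => s.renT n + 1
  | _, _, _, .right _ s => fun n => match n with | 0 => 0 | m + 1 => s.renT m + 1

/-- The composite `r[l..]` where `l` lives in one part of the context
(embedded via `ρl`) and the tail variables of `r` live in the other part
(embedded via `ρr`); the result lives in the full context. -/
def splice (ρl ρr : Nat → Nat) (l r : Tm C) : Tm C :=
  subst (fun n => match n with
    | 0 => rename ρl l
    | m + 1 => .var (ρr m)) r

/-- The (empty) constant-typing function for a language without constants. -/
def noCst {B : Type} : Empty → Ty B := fun c => c.elim

/-- The set of constants occurring in a term. -/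
def constsOf : Tm C → Set C
  | .cst c => {c}
  | .var _ => ∅
  | .star => ∅
  | .pair t u => constsOf t ∪ constsOf u
  | .proj1 t => constsOf t
  | .proj2 t => constsOf t
  | .lam t => constsOf t
  | .app t u => constsOf t ∪ constsOf u
  | .inl t => constsOf t
  | .inr t => constsOf t
  | .raise t => constsOf t
  | .case s bl br => constsOf s ∪ constsOf bl ∪ constsOf br

/-!
Reduction is the union of β-reduction and of the commuting conversions, so by the Hindley–Rosen
lemma it suffices that each of the two is confluent and that they commute.

β-reduction is confluent by the Tait–Martin-Löf method: parallel β-reduction has the triangle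
property with respect to complete development. The commuting conversions terminate, since they
decrease a polynomial weight, and they are locally confluent: the only genuine critical pair is an
elimination pushed into a `case` whose scrutinee is itself a `raise` or a `case`. Newman's lemma
makes them confluent. Finally, a parallel β-step and a commuting conversion out of the same term
are closed by commuting conversions on one side and a parallel β-step on the other, and Hindley's
strip argument turns this into commutation of the two reflexive-transitive closures.
-/

end STLCp

namespace Relation

variable {α : Type*} {r s : α → α → Prop}

def Confluent (r : α → α → Prop) : Prop :=
  ∀ ⦃a b c⦄, ReflTransGen r a b → ReflTransGen r a c → Join (ReflTransGen r) b c

def LocallyConfluent (r : α → α → Prop) : Prop :=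
  ∀ ⦃a b c⦄, r a b → r a c → Join (ReflTransGen r) b c

theorem Confluent.of_diamond (h : ∀ ⦃a b c⦄, r a b → r a c → Join r b c) : Confluent r :=
  fun _ _ _ ↦ church_rosser fun _ _ _ hab hac ↦
    let ⟨d, hbd, hcd⟩ := h hab hac
    ⟨d, .single hbd, .single hcd⟩

theorem Confluent.of_triangle (f : α → α) (h : ∀ ⦃a b⦄, r a b → r b (f a)) : Confluent r :=
  .of_diamond fun _ _ _ hab hac ↦ ⟨_, h hab, h hac⟩

theorem Confluent.of_le_of_le {p : α → α → Prop} (hp : Confluent p) (hrp : r ≤ p)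
    (hpr : p ≤ ReflTransGen r) : Confluent r := by
  have h : ReflTransGen r = ReflTransGen p :=
    le_antisymm (ReflTransGen.mono hrp) (reflTransGen_closed hpr)
  unfold Confluent
  rw [h]
  exact hp

/-- Newman's lemma. -/
theorem LocallyConfluent.confluent (hwf : WellFounded (flip r)) (h : LocallyConfluent r) :
    Confluent r := by
  intro a
  induction a using hwf.induction with
  | _ a ih =>
    intro b c hab hac
    rcases hab.cases_head with rfl | ⟨b₁, hab₁, hb₁b⟩
    · exact ⟨c, hac, .refl⟩
    rcases hac.cases_head with rfl | ⟨c₁, hac₁, hc₁c⟩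
    · exact ⟨b, .refl, hab⟩
    obtain ⟨d, hb₁d, hc₁d⟩ := h hab₁ hac₁
    obtain ⟨e, hbe, hde⟩ := ih b₁ hab₁ hb₁b hb₁d
    obtain ⟨f, hcf, hef⟩ := ih c₁ hac₁ hc₁c (hc₁d.trans hde)
    exact ⟨f, hbe.trans hef, hcf⟩

theorem reflTransGen_commute
    (h : ∀ ⦃a b c⦄, r a b → s a c → ∃ d, ReflTransGen s b d ∧ ReflGen r c d)
    {a b c : α} (hab : ReflTransGen r a b) (hac : ReflTransGen s a c) :
    ∃ d, ReflTransGen s b d ∧ ReflTransGen r c d := by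
  have strip : ∀ ⦃a b c⦄, r a b → ReflTransGen s a c →
      ∃ d, ReflTransGen s b d ∧ ReflGen r c d := by
    intro a b c hab hac
    induction hac with
    | refl => exact ⟨b, .refl, .single hab⟩
    | tail _ hcd ih =>
      obtain ⟨e, hbe, hce⟩ := ih
      rcases hce with _ | hce
      · exact ⟨_, hbe.tail hcd, .refl⟩
      · obtain ⟨f, hef, hdf⟩ := h hce hcd
        exact ⟨f, hbe.trans hef, hdf⟩
  induction hab with
  | refl => exact ⟨c, hac, .refl⟩
  | tail _ hbb' ih =>
    obtain ⟨d, hbd, hcd⟩ := ih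
    obtain ⟨e, hb'e, hde⟩ := strip hbb' hbd
    exact ⟨e, hb'e, hcd.trans hde.to_reflTransGen⟩

/-- The Hindley–Rosen lemma. -/
theorem Confluent.sup (hr : Confluent r) (hs : Confluent s)
    (hrs : ∀ ⦃a b c⦄, ReflTransGen r a b → ReflTransGen s a c →
      ∃ d, ReflTransGen s b d ∧ ReflTransGen r c d) :
    Confluent (r ⊔ s) := by
  refine Confluent.of_le_of_le (p := Comp (ReflTransGen r) (ReflTransGen s)) ?_ ?_ ?_
  · refine .of_diamond fun a b c ⟨m, ham, hmb⟩ ⟨m', ham', hm'c⟩ ↦ ?_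
    obtain ⟨n, hmn, hm'n⟩ := hr ham ham'
    obtain ⟨p, hnp, hbp⟩ := hrs hmn hmb
    obtain ⟨q, hnq, hcq⟩ := hrs hm'n hm'c
    obtain ⟨z, hpz, hqz⟩ := hs hnp hnq
    exact ⟨z, ⟨p, hbp, hpz⟩, ⟨q, hcq, hqz⟩⟩
  · rintro a b (h | h)
    · exact ⟨b, .single h, .refl⟩
    · exact ⟨a, .refl, .single h⟩
  · rintro a b ⟨m, ham, hmb⟩
    exact (ReflTransGen.mono (fun _ _ ↦ Or.inl) _ _ ham).trans
      (ReflTransGen.mono (fun _ _ ↦ Or.inr) _ _ hmb)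

end Relation

namespace STLCp

open Relation

variable {R S : Tm C → Tm C → Prop}

section Substitution

theorem liftRen_comp (ρ ρ' : ℕ → ℕ) : liftRen ρ ∘ liftRen ρ' = liftRen (ρ ∘ ρ') := by
  funext n; cases n <;> rfl

theorem liftRen_comp_succ (ρ : ℕ → ℕ) : liftRen ρ ∘ Nat.succ = Nat.succ ∘ ρ := rfl

theorem rename_rename (ρ ρ' : ℕ → ℕ) (t : Tm C) :
    rename ρ (rename ρ' t) = rename (ρ ∘ ρ') t := by
  induction t generalizing ρ ρ' <;> simp only [rename, liftRen_comp, Function.comp_apply, *]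

theorem liftSub_comp_liftRen (σ : ℕ → Tm C) (ρ : ℕ → ℕ) :
    liftSub σ ∘ liftRen ρ = liftSub (σ ∘ ρ) := by
  funext n; cases n <;> rfl

theorem liftSub_comp_succ (σ : ℕ → Tm C) : liftSub σ ∘ Nat.succ = rename Nat.succ ∘ σ := rfl

theorem subst_rename (σ : ℕ → Tm C) (ρ : ℕ → ℕ) (t : Tm C) :
    subst σ (rename ρ t) = subst (σ ∘ ρ) t := by
  induction t generalizing σ ρ <;>
    simp only [rename, subst, liftSub_comp_liftRen, Function.comp_apply, *]

theorem rename_comp_liftSub (ρ : ℕ → ℕ) (σ : ℕ → Tm C) :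
    rename (liftRen ρ) ∘ liftSub σ = liftSub (rename ρ ∘ σ) := by
  funext n
  cases n with
  | zero => rfl
  | succ n => simp only [Function.comp_apply, liftSub, rename_rename, liftRen_comp_succ]

theorem rename_subst (ρ : ℕ → ℕ) (σ : ℕ → Tm C) (t : Tm C) :
    rename ρ (subst σ t) = subst (rename ρ ∘ σ) t := by
  induction t generalizing ρ σ <;>
    simp only [rename, subst, ← rename_comp_liftSub, Function.comp_apply, *]

theorem subst_comp_liftSub (σ τ : ℕ → Tm C) :
    subst (liftSub σ) ∘ liftSub τ = liftSub (subst σ ∘ τ) := by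
  funext n
  cases n with
  | zero => rfl
  | succ n => simp only [Function.comp_apply, liftSub, subst_rename, rename_subst]; rfl

theorem subst_subst (σ τ : ℕ → Tm C) (t : Tm C) :
    subst σ (subst τ t) = subst (subst σ ∘ τ) t := by
  induction t generalizing σ τ <;>
    simp only [subst, ← subst_comp_liftSub, Function.comp_apply, *]

theorem liftSub_var : liftSub (C := C) .var = .var := by
  funext n; cases n <;> rfl

theorem subst_var (t : Tm C) : subst .var t = t := by
  induction t <;> simp only [subst, liftSub_var, *]

theorem liftSub_var_comp (ρ : ℕ → ℕ) : liftSub (C := C) (.var ∘ ρ) = .var ∘ liftRen ρ := by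
  funext n; cases n <;> rfl

theorem rename_eq_subst (ρ : ℕ → ℕ) (t : Tm C) : rename ρ t = subst (.var ∘ ρ) t := by
  induction t generalizing ρ <;>
    simp only [rename, subst, liftSub_var_comp, Function.comp_apply, *]

theorem subst_sub0_rename_succ (u t : Tm C) : subst (sub0 u) (rename Nat.succ t) = t := by
  rw [subst_rename]; exact subst_var t

theorem subst_subst_sub0 (σ : ℕ → Tm C) (u t : Tm C) :
    subst σ (subst (sub0 u) t) = subst (sub0 (subst σ u)) (subst (liftSub σ) t) := by
  rw [subst_subst, subst_subst]
  congr 1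
  funext n
  cases n with
  | zero => rfl
  | succ n => exact (subst_sub0_rename_succ _ _).symm

theorem rename_subst_sub0 (ρ : ℕ → ℕ) (u t : Tm C) :
    rename ρ (subst (sub0 u) t) = subst (sub0 (rename ρ u)) (rename (liftRen ρ) t) := by
  simp only [rename_eq_subst, subst_subst_sub0, liftSub_var_comp]

end Substitution

section Congruence

def SubstClosed (R : Tm C → Tm C → Prop) : Prop :=
  ∀ σ t u, R t u → R (subst σ t) (subst σ u)

theorem Cong.mono (hRS : R ≤ S) : Cong R ≤ Cong S := by
  intro t u h
  induction h with
  | base h => exact .base (hRS _ _ h)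
  | pairL _ ih => exact .pairL ih
  | pairR _ ih => exact .pairR ih
  | proj1 _ ih => exact .proj1 ih
  | proj2 _ ih => exact .proj2 ih
  | lam _ ih => exact .lam ih
  | appL _ ih => exact .appL ih
  | appR _ ih => exact .appR ih
  | inl _ ih => exact .inl ih
  | inr _ ih => exact .inr ih
  | raise _ ih => exact .raise ih
  | caseS _ ih => exact .caseS ih
  | caseL _ ih => exact .caseL ih
  | caseR _ ih => exact .caseR ih

theorem cong_or : Cong (fun t u ↦ R t u ∨ S t u) = Cong R ⊔ Cong S := by
  refine le_antisymm (fun t u h ↦ ?_)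
    (sup_le (Cong.mono fun _ _ ↦ Or.inl) (Cong.mono fun _ _ ↦ Or.inr))
  induction h with
  | base h => exact h.imp .base .base
  | pairL _ ih => exact ih.imp .pairL .pairL
  | pairR _ ih => exact ih.imp .pairR .pairR
  | proj1 _ ih => exact ih.imp .proj1 .proj1
  | proj2 _ ih => exact ih.imp .proj2 .proj2
  | lam _ ih => exact ih.imp .lam .lam
  | appL _ ih => exact ih.imp .appL .appL
  | appR _ ih => exact ih.imp .appR .appR
  | inl _ ih => exact ih.imp .inl .inl
  | inr _ ih => exact ih.imp .inr .inr
  | raise _ ih => exact ih.imp .raise .raise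
  | caseS _ ih => exact ih.imp .caseS .caseS
  | caseL _ ih => exact ih.imp .caseL .caseL
  | caseR _ ih => exact ih.imp .caseR .caseR

theorem SubstClosed.cong (hR : SubstClosed R) : SubstClosed (Cong R) := by
  intro σ t u h
  induction h generalizing σ with
  | base h => exact .base (hR σ _ _ h)
  | pairL _ ih => exact .pairL (ih σ)
  | pairR _ ih => exact .pairR (ih σ)
  | proj1 _ ih => exact .proj1 (ih σ)
  | proj2 _ ih => exact .proj2 (ih σ)
  | lam _ ih => exact .lam (ih _)
  | appL _ ih => exact .appL (ih σ)
  | appR _ ih => exact .appR (ih σ)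
  | inl _ ih => exact .inl (ih σ)
  | inr _ ih => exact .inr (ih σ)
  | raise _ ih => exact .raise (ih σ)
  | caseS _ ih => exact .caseS (ih σ)
  | caseL _ ih => exact .caseL (ih _)
  | caseR _ ih => exact .caseR (ih _)

theorem SubstClosed.reflTransGen (hR : SubstClosed R) : SubstClosed (ReflTransGen R) :=
  fun σ _ _ h ↦ ReflTransGen.lift (subst σ) (fun _ _ ↦ hR σ _ _) _ _ h

theorem SubstClosed.rename (hR : SubstClosed R) {t u : Tm C} (h : R t u) (ρ : ℕ → ℕ) :
    R (STLCp.rename ρ t) (STLCp.rename ρ u) := by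
  simpa only [rename_eq_subst] using hR (.var ∘ ρ) _ _ h

theorem reflTransGen_cong (f : Tm C → Tm C) (hf : ∀ {x y}, Cong R x y → Cong R (f x) (f y))
    {t u : Tm C} (h : ReflTransGen (Cong R) t u) : ReflTransGen (Cong R) (f t) (f u) :=
  ReflTransGen.lift f (fun _ _ ↦ hf) _ _ h

theorem reflTransGen_cong_pair {t t' u u' : Tm C} (ht : ReflTransGen (Cong R) t t')
    (hu : ReflTransGen (Cong R) u u') : ReflTransGen (Cong R) (.pair t u) (.pair t' u') :=
  (reflTransGen_cong _ .pairL ht).trans (reflTransGen_cong _ .pairR hu)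

theorem reflTransGen_cong_app {t t' u u' : Tm C} (ht : ReflTransGen (Cong R) t t')
    (hu : ReflTransGen (Cong R) u u') : ReflTransGen (Cong R) (.app t u) (.app t' u') :=
  (reflTransGen_cong _ .appL ht).trans (reflTransGen_cong _ .appR hu)

theorem reflTransGen_cong_case {s s' bl bl' br br' : Tm C} (hs : ReflTransGen (Cong R) s s')
    (hl : ReflTransGen (Cong R) bl bl') (hr : ReflTransGen (Cong R) br br') :
    ReflTransGen (Cong R) (.case s bl br) (.case s' bl' br') :=
  ((reflTransGen_cong _ .caseS hs).trans (reflTransGen_cong _ .caseL hl)).trans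
    (reflTransGen_cong _ .caseR hr)

theorem reflTransGen_cong_subst (hR : SubstClosed R) {σ σ' : ℕ → Tm C}
    (hσ : ∀ n, ReflTransGen (Cong R) (σ n) (σ' n)) (t : Tm C) :
    ReflTransGen (Cong R) (subst σ t) (subst σ' t) := by
  have hlift : ∀ {σ σ' : ℕ → Tm C}, (∀ n, ReflTransGen (Cong R) (σ n) (σ' n)) →
      ∀ n, ReflTransGen (Cong R) (liftSub σ n) (liftSub σ' n)
    | _, _, _, 0 => .refl
    | _, _, hσ, n + 1 => hR.cong.reflTransGen.rename (hσ n) _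
  induction t generalizing σ σ' with
  | cst | star => exact .refl
  | var n => exact hσ n
  | pair _ _ iht ihu => exact reflTransGen_cong_pair (iht hσ) (ihu hσ)
  | proj1 _ ih => exact reflTransGen_cong _ .proj1 (ih hσ)
  | proj2 _ ih => exact reflTransGen_cong _ .proj2 (ih hσ)
  | lam _ ih => exact reflTransGen_cong _ .lam (ih (hlift hσ))
  | app _ _ iht ihu => exact reflTransGen_cong_app (iht hσ) (ihu hσ)
  | inl _ ih => exact reflTransGen_cong _ .inl (ih hσ)
  | inr _ ih => exact reflTransGen_cong _ .inr (ih hσ)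
  | raise _ ih => exact reflTransGen_cong _ .raise (ih hσ)
  | case _ _ _ ihs ihl ihr =>
    exact reflTransGen_cong_case (ihs hσ) (ihl (hlift hσ)) (ihr (hlift hσ))

theorem join_cong (f : Tm C → Tm C) (hf : ∀ {x y}, Cong R x y → Cong R (f x) (f y))
    {t u : Tm C} (h : Join (ReflTransGen (Cong R)) t u) :
    Join (ReflTransGen (Cong R)) (f t) (f u) :=
  let ⟨w, htw, huw⟩ := h
  ⟨f w, reflTransGen_cong f hf htw, reflTransGen_cong f hf huw⟩
theorem Cong.locallyConfluent
    (hR : ∀ ⦃t u v⦄, R t u → Cong R t v → Join (ReflTransGen (Cong R)) u v) :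
    LocallyConfluent (Cong R) := by
  intro t u v h₁ h₂
  induction h₁ generalizing v with
  | base h₁ => exact hR h₁ h₂
  | pairL h₁ ih =>
    cases h₂ with
    | base h₂ => exact Join.symm.symm _ _ (hR h₂ (.pairL h₁))
    | pairL h₂ => exact join_cong _ .pairL (ih h₂)
    | pairR h₂ => exact ⟨_, .single (.pairR h₂), .single (.pairL h₁)⟩
  | pairR h₁ ih =>
    cases h₂ with
    | base h₂ => exact Join.symm.symm _ _ (hR h₂ (.pairR h₁))
    | pairL h₂ => exact ⟨_, .single (.pairL h₂), .single (.pairR h₁)⟩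
    | pairR h₂ => exact join_cong _ .pairR (ih h₂)
  | proj1 h₁ ih =>
    cases h₂ with
    | base h₂ => exact Join.symm.symm _ _ (hR h₂ (.proj1 h₁))
    | proj1 h₂ => exact join_cong _ .proj1 (ih h₂)
  | proj2 h₁ ih =>
    cases h₂ with
    | base h₂ => exact Join.symm.symm _ _ (hR h₂ (.proj2 h₁))
    | proj2 h₂ => exact join_cong _ .proj2 (ih h₂)
  | lam h₁ ih =>
    cases h₂ with
    | base h₂ => exact Join.symm.symm _ _ (hR h₂ (.lam h₁))
    | lam h₂ => exact join_cong _ .lam (ih h₂)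
  | appL h₁ ih =>
    cases h₂ with
    | base h₂ => exact Join.symm.symm _ _ (hR h₂ (.appL h₁))
    | appL h₂ => exact join_cong _ .appL (ih h₂)
    | appR h₂ => exact ⟨_, .single (.appR h₂), .single (.appL h₁)⟩
  | appR h₁ ih =>
    cases h₂ with
    | base h₂ => exact Join.symm.symm _ _ (hR h₂ (.appR h₁))
    | appL h₂ => exact ⟨_, .single (.appL h₂), .single (.appR h₁)⟩
    | appR h₂ => exact join_cong _ .appR (ih h₂)
  | inl h₁ ih =>
    cases h₂ with
    | base h₂ => exact Join.symm.symm _ _ (hR h₂ (.inl h₁))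
    | inl h₂ => exact join_cong _ .inl (ih h₂)
  | inr h₁ ih =>
    cases h₂ with
    | base h₂ => exact Join.symm.symm _ _ (hR h₂ (.inr h₁))
    | inr h₂ => exact join_cong _ .inr (ih h₂)
  | raise h₁ ih =>
    cases h₂ with
    | base h₂ => exact Join.symm.symm _ _ (hR h₂ (.raise h₁))
    | raise h₂ => exact join_cong _ .raise (ih h₂)
  | caseS h₁ ih =>
    cases h₂ with
    | base h₂ => exact Join.symm.symm _ _ (hR h₂ (.caseS h₁))
    | caseS h₂ => exact join_cong _ .caseS (ih h₂)
    | caseL h₂ => exact ⟨_, .single (.caseL h₂), .single (.caseS h₁)⟩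
    | caseR h₂ => exact ⟨_, .single (.caseR h₂), .single (.caseS h₁)⟩
  | caseL h₁ ih =>
    cases h₂ with
    | base h₂ => exact Join.symm.symm _ _ (hR h₂ (.caseL h₁))
    | caseS h₂ => exact ⟨_, .single (.caseS h₂), .single (.caseL h₁)⟩
    | caseL h₂ => exact join_cong _ .caseL (ih h₂)
    | caseR h₂ => exact ⟨_, .single (.caseR h₂), .single (.caseL h₁)⟩
  | caseR h₁ ih =>
    cases h₂ with
    | base h₂ => exact Join.symm.symm _ _ (hR h₂ (.caseR h₁))
    | caseS h₂ => exact ⟨_, .single (.caseS h₂), .single (.caseR h₁)⟩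
    | caseL h₂ => exact ⟨_, .single (.caseL h₂), .single (.caseR h₁)⟩
    | caseR h₂ => exact join_cong _ .caseR (ih h₂)

end Congruence

section Eliminations

inductive ElimStep (R : Tm C → Tm C → Prop) : Elim C → Elim C → Prop
  | eapp : R u u' → ElimStep R (.eapp u) (.eapp u')
  | ecaseL : R bl bl' → ElimStep R (.ecase bl br) (.ecase bl' br)
  | ecaseR : R br br' → ElimStep R (.ecase bl br) (.ecase bl br')

def substElim (σ : ℕ → Tm C) : Elim C → Elim C
  | .eapp u => .eapp (subst σ u)
  | .eproj1 => .eproj1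
  | .eproj2 => .eproj2
  | .ecase bl br => .ecase (subst (liftSub σ) bl) (subst (liftSub σ) br)

def IsElim : Tm C → Prop
  | .proj1 _ | .proj2 _ | .app _ _ | .case _ _ _ => True
  | _ => False

theorem isElim_plug (e : Elim C) (x : Tm C) : IsElim (plug e x) := by
  cases e <;> trivial

theorem plug_inj {e e' : Elim C} {x x' : Tm C} (h : plug e x = plug e' x') :
    e = e' ∧ x = x' := by
  cases e <;> cases e' <;> simp_all [plug]

theorem subst_plug (σ : ℕ → Tm C) (e : Elim C) (x : Tm C) :
    subst σ (plug e x) = plug (substElim σ e) (subst σ x) := by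
  cases e <;> rfl

theorem substElim_weakenElim (σ : ℕ → Tm C) (e : Elim C) :
    substElim (liftSub σ) (weakenElim e) = weakenElim (substElim σ e) := by
  cases e <;>
    simp only [substElim, weakenElim, subst_rename, rename_subst, liftSub_comp_liftRen,
      rename_comp_liftSub, liftSub_comp_succ]

theorem weakenElim_eq_substElim (e : Elim C) :
    weakenElim e = substElim (.var ∘ Nat.succ) e := by
  cases e <;> simp only [weakenElim, substElim, rename_eq_subst, liftSub_var_comp]

theorem rename_liftRen_succ_plug_weakenElim (e : Elim C) (b : Tm C) :
    rename (liftRen Nat.succ) (plug (weakenElim e) b) =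
      plug (weakenElim (weakenElim e)) (rename (liftRen Nat.succ) b) := by
  simp only [rename_eq_subst _ (plug _ _), rename_eq_subst _ b, ← liftSub_var_comp, subst_plug,
    substElim_weakenElim, ← weakenElim_eq_substElim]

theorem subst_sub0_plug_weakenElim (u : Tm C) (e : Elim C) (b : Tm C) :
    subst (sub0 u) (plug (weakenElim e) b) = plug e (subst (sub0 u) b) := by
  have hsub : sub0 u ∘ Nat.succ = .var := rfl
  cases e <;>
    simp only [plug, weakenElim, subst, subst_rename, liftSub_comp_liftRen, hsub, liftSub_var,
      subst_var]

theorem Cong.plug_congr {x x' : Tm C} (h : Cong R x x') (e : Elim C) :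
    Cong R (plug e x) (plug e x') := by
  cases e with
  | eapp u => exact .appL h
  | eproj1 => exact .proj1 h
  | eproj2 => exact .proj2 h
  | ecase bl br => exact .caseS h

theorem ElimStep.plug_congr {e e' : Elim C} (h : ElimStep (Cong R) e e') (x : Tm C) :
    Cong R (plug e x) (plug e' x) := by
  cases h with
  | eapp h => exact .appR h
  | ecaseL h => exact .caseL h
  | ecaseR h => exact .caseR h

theorem ElimStep.weakenElim (hR : SubstClosed R) {e e' : Elim C} (h : ElimStep R e e') :
    ElimStep R (STLCp.weakenElim e) (STLCp.weakenElim e') := by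
  cases h with
  | eapp h => exact .eapp (hR.rename h _)
  | ecaseL h => exact .ecaseL (hR.rename h _)
  | ecaseR h => exact .ecaseR (hR.rename h _)

theorem Cong.plug_inv {e : Elim C} {x v : Tm C} (h : Cong R (plug e x) v) :
    R (plug e x) v ∨ (∃ x', Cong R x x' ∧ v = plug e x') ∨
      (∃ e', ElimStep (Cong R) e e' ∧ v = plug e' x) := by
  cases e with
  | eapp u =>
    cases h with
    | base h => exact .inl h
    | appL h => exact .inr (.inl ⟨_, h, rfl⟩)
    | appR h => exact .inr (.inr ⟨_, .eapp h, rfl⟩)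
  | eproj1 =>
    cases h with
    | base h => exact .inl h
    | proj1 h => exact .inr (.inl ⟨_, h, rfl⟩)
  | eproj2 =>
    cases h with
    | base h => exact .inl h
    | proj2 h => exact .inr (.inl ⟨_, h, rfl⟩)
  | ecase bl br =>
    cases h with
    | base h => exact .inl h
    | caseS h => exact .inr (.inl ⟨_, h, rfl⟩)
    | caseL h => exact .inr (.inr ⟨_, .ecaseL h, rfl⟩)
    | caseR h => exact .inr (.inr ⟨_, .ecaseR h, rfl⟩)

end Eliminations

section CommutingConversions

theorem CCBase.isElim {t u : Tm C} (h : CCBase t u) : IsElim t := by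
  cases h <;> apply isElim_plug

theorem CCBase.plug_inv {e : Elim C} {x v : Tm C} (h : CCBase (plug e x) v) :
    (∃ s, x = .raise s ∧ v = .raise s) ∨
      ∃ s bl br, x = .case s bl br ∧
        v = .case s (plug (weakenElim e) bl) (plug (weakenElim e) br) := by
  generalize ht : plug e x = t at h
  cases h with
  | raise e' s => obtain ⟨rfl, rfl⟩ := plug_inj ht; exact .inl ⟨s, rfl, rfl⟩
  | case e' s bl br => obtain ⟨rfl, rfl⟩ := plug_inj ht; exact .inr ⟨s, bl, br, rfl, rfl⟩

theorem CCBase.substClosed : SubstClosed (CCBase (C := C)) := by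
  intro σ _ _ h
  cases h with
  | raise e s => rw [subst_plug]; exact .raise _ _
  | case e s bl br =>
    simp only [subst_plug, subst, substElim_weakenElim]
    exact .case _ _ _ _

theorem StepCC.substClosed : SubstClosed (StepCC (C := C)) :=
  CCBase.substClosed.cong

theorem RedsCC.subst {t u : Tm C} (h : RedsCC t u) (σ : ℕ → Tm C) :
    RedsCC (STLCp.subst σ t) (STLCp.subst σ u) :=
  StepCC.substClosed.reflTransGen σ _ _ h

theorem RedsCC.subst_sub0 {u u' : Tm C} (h : RedsCC u u') (t : Tm C) :
    RedsCC (STLCp.subst (sub0 u) t) (STLCp.subst (sub0 u') t) :=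
  reflTransGen_cong_subst CCBase.substClosed (σ := sub0 u) (σ' := sub0 u') (fun
    | 0 => h
    | _ + 1 => .refl) t

/-- A polynomial interpretation: an elimination multiplies the weight of the term it is applied
to by `elimWeight e ≥ 2`, so pushing it into both branches of a `case`, or dropping it at a
`raise`, makes the weight decrease. -/
def weight : Tm C → ℕ
  | .cst _ | .var _ | .star => 1
  | .pair t u => weight t + weight u + 1
  | .proj1 t | .proj2 t => weight t * 2
  | .lam t | .inl t | .inr t | .raise t => weight t + 1
  | .app t u => weight t * (weight u + 2)
  | .case s bl br => weight s * (weight bl + weight br + 1)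

def elimWeight : Elim C → ℕ
  | .eapp u => weight u + 2
  | .eproj1 | .eproj2 => 2
  | .ecase bl br => weight bl + weight br + 1

theorem weight_pos (t : Tm C) : 0 < weight t := by
  induction t <;> simp only [weight] <;> first | omega | exact Nat.mul_pos ‹_› (by omega)

theorem weight_rename (ρ : ℕ → ℕ) (t : Tm C) : weight (rename ρ t) = weight t := by
  induction t generalizing ρ <;> simp only [weight, rename, *]

theorem weight_plug (e : Elim C) (x : Tm C) : weight (plug e x) = weight x * elimWeight e := by
  cases e <;> rfl

theorem two_le_elimWeight (e : Elim C) : 2 ≤ elimWeight e := by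
  cases e with
  | ecase bl br => have := weight_pos bl; simp only [elimWeight]; omega
  | _ => simp only [elimWeight]; omega

theorem elimWeight_weakenElim (e : Elim C) : elimWeight (weakenElim e) = elimWeight e := by
  cases e <;> simp only [weakenElim, elimWeight, weight_rename]

theorem CCBase.weight_lt {t u : Tm C} (h : CCBase t u) : weight u < weight t := by
  cases h with
  | raise e s =>
    have := two_le_elimWeight e
    have := weight_pos (.raise s)
    rw [weight_plug]
    nlinarith
  | case e s bl br =>
    have := two_le_elimWeight e
    have := weight_pos s
    simp only [weight_plug, weight, elimWeight_weakenElim]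
    nlinarith

theorem weight_lt_of_cong (hR : ∀ t u, R t u → weight u < weight t) {t u : Tm C}
    (h : Cong R t u) : weight u < weight t := by
  induction h with
  | base h => exact hR _ _ h
  | appR _ ih | caseL _ ih | caseR _ ih =>
    simp only [weight]; exact (Nat.mul_lt_mul_left (weight_pos _)).2 (by omega)
  | appL _ ih | caseS _ ih => simp only [weight]; exact Nat.mul_lt_mul_of_pos_right ih (by omega)
  | _ => simp only [weight]; omega

theorem StepCC.wellFounded : WellFounded (flip (StepCC (C := C))) :=
  Subrelation.wf (fun h ↦ weight_lt_of_cong (fun _ _ ↦ CCBase.weight_lt) h) (measure weight).wf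

theorem CCBase.join_raise (e : Elim C) (s : Tm C) {v : Tm C}
    (hv : StepCC (plug e (.raise s)) v) : Join RedsCC (.raise s) v := by
  rcases hv.plug_inv with hv | ⟨x, hx, rfl⟩ | ⟨e', -, rfl⟩
  · rcases hv.plug_inv with ⟨_, ⟨⟩, rfl⟩ | ⟨_, _, _, ⟨⟩, -⟩
    exact ⟨_, .refl, .refl⟩
  · cases hx with
    | base hx => exact nomatch hx.isElim
    | raise hs => exact ⟨_, .single (.raise hs), .single (.base (.raise e _))⟩
  · exact ⟨_, .refl, .single (.base (.raise e' s))⟩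

theorem CCBase.join_case_case (e : Elim C) (q dl dr bl br : Tm C) :
    Join RedsCC (.case (.case q dl dr) (plug (weakenElim e) bl) (plug (weakenElim e) br))
      (plug e (.case q (plug (weakenElim (.ecase bl br)) dl)
        (plug (weakenElim (.ecase bl br)) dr))) := by
  have branch : ∀ d, StepCC (plug (weakenElim e) (plug (weakenElim (.ecase bl br)) d))
      (plug (weakenElim (.ecase (plug (weakenElim e) bl) (plug (weakenElim e) br))) d) := by
    intro d
    change StepCC (plug (weakenElim e) (.case d (rename (liftRen Nat.succ) bl)
        (rename (liftRen Nat.succ) br)))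
      (.case d (rename (liftRen Nat.succ) (plug (weakenElim e) bl))
        (rename (liftRen Nat.succ) (plug (weakenElim e) br)))
    rw [rename_liftRen_succ_plug_weakenElim, rename_liftRen_succ_plug_weakenElim]
    exact .base (.case _ _ _ _)
  exact ⟨_, .single (.base (.case (.ecase _ _) q dl dr)),
    .head (.base (.case _ _ _ _)) (.head (.caseL (branch dl)) (.single (.caseR (branch dr))))⟩

theorem CCBase.join_case (e : Elim C) (s bl br : Tm C) {v : Tm C}
    (hv : StepCC (plug e (.case s bl br)) v) :
    Join RedsCC (.case s (plug (weakenElim e) bl) (plug (weakenElim e) br)) v := by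
  have root : ∀ (e : Elim C) s bl br, StepCC (plug e (.case s bl br))
      (.case s (plug (weakenElim e) bl) (plug (weakenElim e) br)) :=
    fun _ _ _ _ ↦ .base (.case _ _ _ _)
  rcases hv.plug_inv with hv | ⟨x, hx, rfl⟩ | ⟨e', he, rfl⟩
  · rcases hv.plug_inv with ⟨_, ⟨⟩, -⟩ | ⟨_, _, _, ⟨⟩, rfl⟩
    exact ⟨_, .refl, .refl⟩
  · cases hx with
    | base hx =>
      rcases CCBase.plug_inv (e := .ecase bl br) hx with ⟨r, rfl, rfl⟩ | ⟨q, dl, dr, rfl, rfl⟩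
      · exact ⟨_, .single (.base (.raise (.ecase _ _) r)), .single (.base (.raise e r))⟩
      · exact CCBase.join_case_case e q dl dr bl br
    | caseS hs => exact ⟨_, .single (.caseS hs), .single (root ..)⟩
    | caseL hl => exact ⟨_, .single (.caseL (hl.plug_congr _)), .single (root ..)⟩
    | caseR hr => exact ⟨_, .single (.caseR (hr.plug_congr _)), .single (root ..)⟩
  · have he := he.weakenElim StepCC.substClosed
    exact ⟨_, .head (.caseL (he.plug_congr bl)) (.single (.caseR (he.plug_congr br))),
      .single (root ..)⟩

theorem StepCC.confluent : Confluent (StepCC (C := C)) := by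
  refine LocallyConfluent.confluent StepCC.wellFounded (Cong.locallyConfluent ?_)
  rintro _ _ v (⟨e, s⟩ | ⟨e, s, bl, br⟩) hv
  · exact CCBase.join_raise e s hv
  · exact CCBase.join_case e s bl br hv

end CommutingConversions

section ParallelBeta

inductive ParBeta : Tm C → Tm C → Prop
  | cst (c : C) : ParBeta (.cst c) (.cst c)
  | var (n : ℕ) : ParBeta (.var n) (.var n)
  | star : ParBeta .star .star
  | pair : ParBeta t t' → ParBeta u u' → ParBeta (.pair t u) (.pair t' u')
  | proj1 : ParBeta t t' → ParBeta (.proj1 t) (.proj1 t')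
  | proj2 : ParBeta t t' → ParBeta (.proj2 t) (.proj2 t')
  | lam : ParBeta t t' → ParBeta (.lam t) (.lam t')
  | app : ParBeta t t' → ParBeta u u' → ParBeta (.app t u) (.app t' u')
  | inl : ParBeta t t' → ParBeta (.inl t) (.inl t')
  | inr : ParBeta t t' → ParBeta (.inr t) (.inr t')
  | raise : ParBeta t t' → ParBeta (.raise t) (.raise t')
  | case : ParBeta s s' → ParBeta bl bl' → ParBeta br br' →
      ParBeta (.case s bl br) (.case s' bl' br')
  | beta_proj1 : ParBeta t t' → ParBeta u u' → ParBeta (.proj1 (.pair t u)) t'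
  | beta_proj2 : ParBeta t t' → ParBeta u u' → ParBeta (.proj2 (.pair t u)) u'
  | beta_app : ParBeta t t' → ParBeta u u' → ParBeta (.app (.lam t) u) (subst (sub0 u') t')
  | beta_inl : ParBeta a a' → ParBeta bl bl' →
      ParBeta (.case (.inl a) bl br) (subst (sub0 a') bl')
  | beta_inr : ParBeta b b' → ParBeta br br' →
      ParBeta (.case (.inr b) bl br) (subst (sub0 b') br')

theorem ParBeta.refl (t : Tm C) : ParBeta t t := by
  induction t <;> constructor <;> assumption

theorem ParBeta.rename {t t' : Tm C} (h : ParBeta t t') (ρ : ℕ → ℕ) :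
    ParBeta (STLCp.rename ρ t) (STLCp.rename ρ t') := by
  induction h generalizing ρ with
  | cst => exact .cst _
  | var => exact .var _
  | star => exact .star
  | pair _ _ ih₁ ih₂ => exact .pair (ih₁ ρ) (ih₂ ρ)
  | proj1 _ ih => exact .proj1 (ih ρ)
  | proj2 _ ih => exact .proj2 (ih ρ)
  | lam _ ih => exact .lam (ih _)
  | app _ _ ih₁ ih₂ => exact .app (ih₁ ρ) (ih₂ ρ)
  | inl _ ih => exact .inl (ih ρ)
  | inr _ ih => exact .inr (ih ρ)
  | raise _ ih => exact .raise (ih ρ)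
  | case _ _ _ ih₁ ih₂ ih₃ => exact .case (ih₁ ρ) (ih₂ _) (ih₃ _)
  | beta_proj1 _ _ ih₁ ih₂ => exact .beta_proj1 (ih₁ ρ) (ih₂ ρ)
  | beta_proj2 _ _ ih₁ ih₂ => exact .beta_proj2 (ih₁ ρ) (ih₂ ρ)
  | beta_app _ _ ih₁ ih₂ =>
    simpa only [STLCp.rename, rename_subst_sub0] using beta_app (ih₁ (liftRen ρ)) (ih₂ ρ)
  | beta_inl _ _ ih₁ ih₂ =>
    simpa only [STLCp.rename, rename_subst_sub0] using beta_inl (ih₁ ρ) (ih₂ (liftRen ρ))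
  | beta_inr _ _ ih₁ ih₂ =>
    simpa only [STLCp.rename, rename_subst_sub0] using beta_inr (ih₁ ρ) (ih₂ (liftRen ρ))

theorem ParBeta.subst {t t' : Tm C} (h : ParBeta t t') {σ σ' : ℕ → Tm C}
    (hσ : ∀ n, ParBeta (σ n) (σ' n)) : ParBeta (STLCp.subst σ t) (STLCp.subst σ' t') := by
  have hlift : ∀ {σ σ' : ℕ → Tm C}, (∀ n, ParBeta (σ n) (σ' n)) →
      ∀ n, ParBeta (liftSub σ n) (liftSub σ' n)
    | _, _, _, 0 => .var 0
    | _, _, hσ, n + 1 => (hσ n).rename _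
  induction h generalizing σ σ' with
  | cst => exact .cst _
  | var n => exact hσ n
  | star => exact .star
  | pair _ _ ih₁ ih₂ => exact .pair (ih₁ hσ) (ih₂ hσ)
  | proj1 _ ih => exact .proj1 (ih hσ)
  | proj2 _ ih => exact .proj2 (ih hσ)
  | lam _ ih => exact .lam (ih (hlift hσ))
  | app _ _ ih₁ ih₂ => exact .app (ih₁ hσ) (ih₂ hσ)
  | inl _ ih => exact .inl (ih hσ)
  | inr _ ih => exact .inr (ih hσ)
  | raise _ ih => exact .raise (ih hσ)
  | case _ _ _ ih₁ ih₂ ih₃ => exact .case (ih₁ hσ) (ih₂ (hlift hσ)) (ih₃ (hlift hσ))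
  | beta_proj1 _ _ ih₁ ih₂ => exact .beta_proj1 (ih₁ hσ) (ih₂ hσ)
  | beta_proj2 _ _ ih₁ ih₂ => exact .beta_proj2 (ih₁ hσ) (ih₂ hσ)
  | beta_app _ _ ih₁ ih₂ =>
    simpa only [STLCp.subst, subst_subst_sub0] using beta_app (ih₁ (hlift hσ)) (ih₂ hσ)
  | beta_inl _ _ ih₁ ih₂ =>
    simpa only [STLCp.subst, subst_subst_sub0] using beta_inl (ih₁ hσ) (ih₂ (hlift hσ))
  | beta_inr _ _ ih₁ ih₂ =>
    simpa only [STLCp.subst, subst_subst_sub0] using beta_inr (ih₁ hσ) (ih₂ (hlift hσ))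

theorem ParBeta.subst_sub0 {t t' u u' : Tm C} (ht : ParBeta t t') (hu : ParBeta u u') :
    ParBeta (STLCp.subst (sub0 u) t) (STLCp.subst (sub0 u') t') :=
  ht.subst fun
    | 0 => hu
    | n + 1 => .var n

def develop : Tm C → Tm C
  | .cst c => .cst c
  | .var n => .var n
  | .star => .star
  | .pair t u => .pair (develop t) (develop u)
  | .proj1 (.pair t _) => develop t
  | .proj1 t => .proj1 (develop t)
  | .proj2 (.pair _ u) => develop u
  | .proj2 t => .proj2 (develop t)
  | .lam t => .lam (develop t)
  | .app (.lam t) u => subst (sub0 (develop u)) (develop t)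
  | .app t u => .app (develop t) (develop u)
  | .inl t => .inl (develop t)
  | .inr t => .inr (develop t)
  | .raise t => .raise (develop t)
  | .case (.inl a) bl _ => subst (sub0 (develop a)) (develop bl)
  | .case (.inr b) _ br => subst (sub0 (develop b)) (develop br)
  | .case s bl br => .case (develop s) (develop bl) (develop br)

theorem ParBeta.develop {t u : Tm C} (h : ParBeta t u) : ParBeta u (develop t) := by
  induction h with
  | cst | var | star => exact .refl _
  | pair _ _ ih₁ ih₂ => exact .pair ih₁ ih₂
  | proj1 h ih =>
    cases h with
    | pair => cases ih with | pair ih₁ ih₂ => exact .beta_proj1 ih₁ ih₂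
    | _ => exact .proj1 ih
  | proj2 h ih =>
    cases h with
    | pair => cases ih with | pair ih₁ ih₂ => exact .beta_proj2 ih₁ ih₂
    | _ => exact .proj2 ih
  | lam _ ih => exact .lam ih
  | app h _ ih₁ ih₂ =>
    cases h with
    | lam => cases ih₁ with | lam ih₁ => exact .beta_app ih₁ ih₂
    | _ => exact .app ih₁ ih₂
  | inl _ ih => exact .inl ih
  | inr _ ih => exact .inr ih
  | raise _ ih => exact .raise ih
  | case h _ _ ihs ihl ihr =>
    cases h with
    | inl => cases ihs with | inl ihs => exact .beta_inl ihs ihl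
    | inr => cases ihs with | inr ihs => exact .beta_inr ihs ihr
    | _ => exact .case ihs ihl ihr
  | beta_proj1 _ _ ih _ | beta_proj2 _ _ _ ih => exact ih
  | beta_app _ _ ih₁ ih₂ | beta_inl _ _ ih₂ ih₁ | beta_inr _ _ ih₂ ih₁ => exact ih₁.subst_sub0 ih₂

theorem ParBeta.confluent : Confluent (ParBeta (C := C)) :=
  .of_triangle STLCp.develop fun _ _ h ↦ h.develop

theorem StepBeta.parBeta {t u : Tm C} (h : StepBeta t u) : ParBeta t u := by
  induction h with
  | base h =>
    cases h with
    | proj1 => exact .beta_proj1 (.refl _) (.refl _)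
    | proj2 => exact .beta_proj2 (.refl _) (.refl _)
    | app => exact .beta_app (.refl _) (.refl _)
    | case_inl => exact .beta_inl (.refl _) (.refl _)
    | case_inr => exact .beta_inr (.refl _) (.refl _)
  | pairL _ ih => exact .pair ih (.refl _)
  | pairR _ ih => exact .pair (.refl _) ih
  | proj1 _ ih => exact .proj1 ih
  | proj2 _ ih => exact .proj2 ih
  | lam _ ih => exact .lam ih
  | appL _ ih => exact .app ih (.refl _)
  | appR _ ih => exact .app (.refl _) ih
  | inl _ ih => exact .inl ih
  | inr _ ih => exact .inr ih
  | raise _ ih => exact .raise ih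
  | caseS _ ih => exact .case ih (.refl _) (.refl _)
  | caseL _ ih => exact .case (.refl _) ih (.refl _)
  | caseR _ ih => exact .case (.refl _) (.refl _) ih

theorem ParBeta.redsBeta {t u : Tm C} (h : ParBeta t u) : RedsBeta t u := by
  induction h with
  | cst | var | star => exact .refl
  | pair _ _ ih₁ ih₂ => exact reflTransGen_cong_pair ih₁ ih₂
  | proj1 _ ih => exact reflTransGen_cong _ .proj1 ih
  | proj2 _ ih => exact reflTransGen_cong _ .proj2 ih
  | lam _ ih => exact reflTransGen_cong _ .lam ih
  | app _ _ ih₁ ih₂ => exact reflTransGen_cong_app ih₁ ih₂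
  | inl _ ih => exact reflTransGen_cong _ .inl ih
  | inr _ ih => exact reflTransGen_cong _ .inr ih
  | raise _ ih => exact reflTransGen_cong _ .raise ih
  | case _ _ _ ih₁ ih₂ ih₃ => exact reflTransGen_cong_case ih₁ ih₂ ih₃
  | beta_proj1 _ _ ih₁ ih₂ =>
    exact (reflTransGen_cong _ .proj1 (reflTransGen_cong_pair ih₁ ih₂)).tail (.base (.proj1 _ _))
  | beta_proj2 _ _ ih₁ ih₂ =>
    exact (reflTransGen_cong _ .proj2 (reflTransGen_cong_pair ih₁ ih₂)).tail (.base (.proj2 _ _))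
  | beta_app _ _ ih₁ ih₂ =>
    exact (reflTransGen_cong_app (reflTransGen_cong _ .lam ih₁) ih₂).tail (.base (.app _ _))
  | beta_inl _ _ ih₁ ih₂ =>
    exact (reflTransGen_cong_case (reflTransGen_cong _ .inl ih₁) ih₂ .refl).tail
      (.base (.case_inl _ _ _))
  | beta_inr _ _ ih₁ ih₂ =>
    exact (reflTransGen_cong_case (reflTransGen_cong _ .inr ih₁) .refl ih₂).tail
      (.base (.case_inr _ _ _))

theorem StepBeta.confluent : Confluent (StepBeta (C := C)) :=
  ParBeta.confluent.of_le_of_le (fun _ _ ↦ StepBeta.parBeta) (fun _ _ ↦ ParBeta.redsBeta)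

end ParallelBeta

section Commutation

inductive ParBetaElim : Elim C → Elim C → Prop
  | eapp : ParBeta u u' → ParBetaElim (.eapp u) (.eapp u')
  | eproj1 : ParBetaElim .eproj1 .eproj1
  | eproj2 : ParBetaElim .eproj2 .eproj2
  | ecase : ParBeta bl bl' → ParBeta br br' → ParBetaElim (.ecase bl br) (.ecase bl' br')

theorem ParBeta.plug_congr {x x' : Tm C} {e e' : Elim C} (hx : ParBeta x x')
    (he : ParBetaElim e e') :
    ParBeta (plug e x) (plug e' x') := by
  cases he with
  | eapp hu => exact .app hx hu
  | eproj1 => exact .proj1 hx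
  | eproj2 => exact .proj2 hx
  | ecase hl hr => exact .case hx hl hr

theorem ParBetaElim.weakenElim {e e' : Elim C} (he : ParBetaElim e e') :
    ParBetaElim (STLCp.weakenElim e) (STLCp.weakenElim e') := by
  cases he with
  | eapp hu => exact .eapp (hu.rename _)
  | eproj1 => exact .eproj1
  | eproj2 => exact .eproj2
  | ecase hl hr => exact .ecase (hl.rename _) (hr.rename _)

def CCBetaJoin (tb tc : Tm C) : Prop :=
  ∃ w, RedsCC tb w ∧ ParBeta tc w

theorem CCBetaJoin.congr {f g : Tm C → Tm C} (hf : ∀ {x y}, StepCC x y → StepCC (f x) (f y))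
    (hg : ∀ {x y}, ParBeta x y → ParBeta (g x) (f y)) {tb tc : Tm C} (h : CCBetaJoin tb tc) :
    CCBetaJoin (f tb) (g tc) :=
  let ⟨w, hw, hcw⟩ := h
  ⟨f w, reflTransGen_cong f hf hw, hg hcw⟩

def StripCC (t tb : Tm C) : Prop :=
  ∀ ⦃tc⦄, StepCC t tc → CCBetaJoin tb tc

theorem ParBeta.commute_ccBase {e e' : Elim C} {x x' v : Tm C} (hx : ParBeta x x')
    (he : ParBetaElim e e') (h : CCBase (plug e x) v) : CCBetaJoin (plug e' x') v := by
  rcases h.plug_inv with ⟨s, rfl, rfl⟩ | ⟨s, bl, br, rfl, rfl⟩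
  · cases hx with
    | raise hs => exact ⟨_, .single (.base (.raise e' _)), .raise hs⟩
  · have he := he.weakenElim
    cases hx with
    | case hs hl hr =>
      exact ⟨_, .single (.base (.case e' _ _ _)), .case hs (hl.plug_congr he) (hr.plug_congr he)⟩
    | beta_inl ha hl =>
      refine ⟨_, .refl, ?_⟩
      rw [← subst_sub0_plug_weakenElim]
      exact .beta_inl ha (hl.plug_congr he)
    | beta_inr hb hr =>
      refine ⟨_, .refl, ?_⟩
      rw [← subst_sub0_plug_weakenElim]
      exact .beta_inr hb (hr.plug_congr he)

theorem StripCC.beta_proj1 {t t' u u' : Tm C} (ht : ParBeta t t') (hu : ParBeta u u')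
    (iht : StripCC t t') : StripCC (.proj1 (.pair t u)) t' := by
  intro _ hc
  cases hc with
  | base hc => (rcases CCBase.plug_inv (e := .eproj1) hc with ⟨_, ⟨⟩, -⟩ | ⟨_, _, _, ⟨⟩, -⟩)
  | proj1 hc =>
    cases hc with
    | base hc => exact nomatch hc.isElim
    | pairL hc => obtain ⟨w, hw, hcw⟩ := iht hc; exact ⟨w, hw, .beta_proj1 hcw hu⟩
    | pairR _ => exact ⟨_, .refl, .beta_proj1 ht (.refl _)⟩

theorem StripCC.beta_proj2 {t t' u u' : Tm C} (ht : ParBeta t t') (hu : ParBeta u u')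
    (ihu : StripCC u u') : StripCC (.proj2 (.pair t u)) u' := by
  intro _ hc
  cases hc with
  | base hc => (rcases CCBase.plug_inv (e := .eproj2) hc with ⟨_, ⟨⟩, -⟩ | ⟨_, _, _, ⟨⟩, -⟩)
  | proj2 hc =>
    cases hc with
    | base hc => exact nomatch hc.isElim
    | pairL _ => exact ⟨_, .refl, .beta_proj2 (.refl _) hu⟩
    | pairR hc => obtain ⟨w, hw, hcw⟩ := ihu hc; exact ⟨w, hw, .beta_proj2 ht hcw⟩

theorem StripCC.beta_app {t t' u u' : Tm C} (ht : ParBeta t t') (hu : ParBeta u u')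
    (iht : StripCC t t') (ihu : StripCC u u') :
    StripCC (.app (.lam t) u) (subst (sub0 u') t') := by
  intro _ hc
  cases hc with
  | base hc => (rcases CCBase.plug_inv (e := .eapp _) hc with ⟨_, ⟨⟩, -⟩ | ⟨_, _, _, ⟨⟩, -⟩)
  | appL hc =>
    cases hc with
    | base hc => exact nomatch hc.isElim
    | lam hc => obtain ⟨w, hw, hcw⟩ := iht hc; exact ⟨_, hw.subst _, .beta_app hcw hu⟩
  | appR hc => obtain ⟨w, hw, hcw⟩ := ihu hc; exact ⟨_, hw.subst_sub0 _, .beta_app ht hcw⟩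

theorem StripCC.beta_inl {a a' bl bl' br : Tm C} (ha : ParBeta a a') (hl : ParBeta bl bl')
    (iha : StripCC a a') (ihl : StripCC bl bl') :
    StripCC (.case (.inl a) bl br) (subst (sub0 a') bl') := by
  intro _ hc
  cases hc with
  | base hc => (rcases CCBase.plug_inv (e := .ecase _ _) hc with ⟨_, ⟨⟩, -⟩ | ⟨_, _, _, ⟨⟩, -⟩)
  | caseS hc =>
    cases hc with
    | base hc => exact nomatch hc.isElim
    | inl hc => obtain ⟨w, hw, hcw⟩ := iha hc; exact ⟨_, hw.subst_sub0 _, .beta_inl hcw hl⟩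
  | caseL hc => obtain ⟨w, hw, hcw⟩ := ihl hc; exact ⟨_, hw.subst _, .beta_inl ha hcw⟩
  | caseR _ => exact ⟨_, .refl, .beta_inl ha hl⟩

theorem StripCC.beta_inr {b b' bl br br' : Tm C} (hb : ParBeta b b') (hr : ParBeta br br')
    (ihb : StripCC b b') (ihr : StripCC br br') :
    StripCC (.case (.inr b) bl br) (subst (sub0 b') br') := by
  intro _ hc
  cases hc with
  | base hc => (rcases CCBase.plug_inv (e := .ecase _ _) hc with ⟨_, ⟨⟩, -⟩ | ⟨_, _, _, ⟨⟩, -⟩)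
  | caseS hc =>
    cases hc with
    | base hc => exact nomatch hc.isElim
    | inr hc => obtain ⟨w, hw, hcw⟩ := ihb hc; exact ⟨_, hw.subst_sub0 _, .beta_inr hcw hr⟩
  | caseL _ => exact ⟨_, .refl, .beta_inr hb hr⟩
  | caseR hc => obtain ⟨w, hw, hcw⟩ := ihr hc; exact ⟨_, hw.subst _, .beta_inr hb hcw⟩

theorem ParBeta.stripCC {t tb : Tm C} (h : ParBeta t tb) : StripCC t tb := by
  intro tc hc
  induction h generalizing tc with
  | cst | var | star => cases hc with | base hc => exact nomatch hc.isElim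
  | pair h₁ h₂ ih₁ ih₂ =>
    cases hc with
    | base hc => exact nomatch hc.isElim
    | pairL hc => exact (ih₁ hc).congr .pairL (.pair · h₂)
    | pairR hc => exact (ih₂ hc).congr .pairR (.pair h₁ ·)
  | proj1 h ih =>
    cases hc with
    | base hc => exact h.commute_ccBase .eproj1 hc
    | proj1 hc => exact (ih hc).congr .proj1 .proj1
  | proj2 h ih =>
    cases hc with
    | base hc => exact h.commute_ccBase .eproj2 hc
    | proj2 hc => exact (ih hc).congr .proj2 .proj2
  | lam _ ih =>
    cases hc with
    | base hc => exact nomatch hc.isElim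
    | lam hc => exact (ih hc).congr .lam .lam
  | app h₁ h₂ ih₁ ih₂ =>
    cases hc with
    | base hc => exact h₁.commute_ccBase (.eapp h₂) hc
    | appL hc => exact (ih₁ hc).congr .appL (.app · h₂)
    | appR hc => exact (ih₂ hc).congr .appR (.app h₁ ·)
  | inl _ ih =>
    cases hc with
    | base hc => exact nomatch hc.isElim
    | inl hc => exact (ih hc).congr .inl .inl
  | inr _ ih =>
    cases hc with
    | base hc => exact nomatch hc.isElim
    | inr hc => exact (ih hc).congr .inr .inr
  | raise _ ih =>
    cases hc with
    | base hc => exact nomatch hc.isElim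
    | raise hc => exact (ih hc).congr .raise .raise
  | case hs hl hr ihs ihl ihr =>
    cases hc with
    | base hc => exact hs.commute_ccBase (.ecase hl hr) hc
    | caseS hc => exact (ihs hc).congr .caseS (.case · hl hr)
    | caseL hc => exact (ihl hc).congr .caseL (.case hs · hr)
    | caseR hc => exact (ihr hc).congr .caseR (.case hs hl ·)
  | beta_proj1 h₁ h₂ ih₁ _ => exact StripCC.beta_proj1 h₁ h₂ ih₁ hc
  | beta_proj2 h₁ h₂ _ ih₂ => exact StripCC.beta_proj2 h₁ h₂ ih₂ hc
  | beta_app h₁ h₂ ih₁ ih₂ => exact StripCC.beta_app h₁ h₂ ih₁ ih₂ hc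
  | beta_inl h₁ h₂ ih₁ ih₂ => exact StripCC.beta_inl h₁ h₂ ih₁ ih₂ hc
  | beta_inr h₁ h₂ ih₁ ih₂ => exact StripCC.beta_inr h₁ h₂ ih₁ ih₂ hc

theorem redsBeta_commute_redsCC {t u v : Tm C} (hu : RedsBeta t u) (hv : RedsCC t v) :
    ∃ w, RedsCC u w ∧ RedsBeta v w := by
  have hu : ReflTransGen ParBeta t u := ReflTransGen.mono (fun _ _ ↦ StepBeta.parBeta) _ _ hu
  obtain ⟨w, huw, hvw⟩ := reflTransGen_commute
    (fun _ _ _ hb hc ↦ (hb.stripCC hc).imp fun _ ⟨h, h'⟩ ↦ ⟨h, .single h'⟩) hu hv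
  exact ⟨w, huw, reflTransGen_closed (fun _ _ ↦ ParBeta.redsBeta) _ _ hvw⟩

end Commutation

theorem step_eq_sup : Step (C := C) = StepBeta ⊔ StepCC := cong_or

/-- **Confluence.** Reduction (β-rules plus commuting conversions) in the
simply-typed λ-calculus with sums is confluent. -/
theorem confluence {C : Type} (t u u' : Tm C) (h : Reds t u) (h' : Reds t u') :
    ∃ v : Tm C, Reds u v ∧ Reds u' v := by
  have hstep : Confluent (Step (C := C)) := by
    rw [step_eq_sup]
    exact StepBeta.confluent.sup StepCC.confluent fun _ _ _ ↦ redsBeta_commute_redsCC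
  exact hstep h h'

end STLCp
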